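/- arXiv:2507.22596 — 4 statements merged into one kernel-verified Lean document; each statement's English description precedes it below -/
import Mathlib

section
/- Let G be a finite connected simple graph with at least three edges. Then the line graph L(G) is Hamiltonian if and only if G has a dominating closed trail. -/
/-!
A hamiltonian cycle `e₀ e₁ ⋯ eₘ = e₀` of `L(G)` lists every edge once, and consecutive edges
share a vertex `vᵢ ∈ eᵢ ∩ eᵢ₊₁`. Since `vᵢ₋₁` and `vᵢ` both lie on `eᵢ`, the vertices
`v₀, v₁, …, vₘ` form a closed walk whose edges are among the distinct `eᵢ`, so it is a closed
trail, and it dominates because `vᵢ ∈ eᵢ`.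

Conversely, walk along a dominating closed trail at `v` and, on reaching a vertex `x`, list the
off-trail edges at `x` not listed before, then the trail edge leaving `x`. Consecutive edges of
this list share a vertex, its first and last edges contain `v`, and domination puts every edge
in it exactly once; with at least three edges it is a hamiltonian cycle of `L(G)`.
-/

open SimpleGraph

/-- A bundled simple graph: a vertex type together with a simple graph on it. -/
abbrev GraphBundle : Type 1 := Σ V : Type, SimpleGraph V

/-- One application of the line graph operation to a bundled graph. -/
def lineStep (G : GraphBundle) : GraphBundle := ⟨G.2.edgeSet, G.2.lineGraph⟩

/-- The `n`-th iterated line graph `L^n(G)`, with `L^0(G) = G`. -/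
def iterLine (n : ℕ) (G : GraphBundle) : GraphBundle := lineStep^[n] G

/-- A graph is traceable if it contains a hamiltonian path, i.e. a path
passing through every vertex. -/
def TraceableGraph {V : Type*} (G : SimpleGraph V) : Prop :=
  ∃ (u v : V) (p : G.Walk u v), p.IsPath ∧ ∀ w, w ∈ p.support

/-- A graph is hamiltonian if it contains a cycle passing through every vertex. -/
def HamiltonianGraph {V : Type*} (G : SimpleGraph V) : Prop :=
  ∃ (v : V) (p : G.Walk v v), p.IsCycle ∧ ∀ w, w ∈ p.support

/-- The hamiltonian path index: the least `n` such that `L^n(G)` has a hamiltonian path. -/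
noncomputable def hpIndex (G : GraphBundle) : ℕ :=
  sInf {n | TraceableGraph (iterLine n G).2}

/-- Degree of a vertex, as the cardinality of its neighbour set. -/
noncomputable def gdeg {V : Type*} (G : SimpleGraph V) (v : V) : ℕ :=
  (G.neighborSet v).ncard

/-- A walk in `G` together with its endpoints. -/
structure PathData {V : Type*} (G : SimpleGraph V) where
  fst : V
  snd : V
  walk : G.Walk fst snd

/-- The set of edges of a `PathData`. -/
def PathData.edgeSet {V : Type*} {G : SimpleGraph V} (p : PathData G) : Set (Sym2 V) :=
  {e | e ∈ p.walk.edges}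

/-- `k(b)`: the number of edges of the branch `b` if it has an end vertex of degree 1,
and the number of edges plus one otherwise. -/
noncomputable def PathData.k {V : Type*} {G : SimpleGraph V} (b : PathData G) : ℕ :=
  if gdeg G b.fst = 1 ∨ gdeg G b.snd = 1 then b.walk.length else b.walk.length + 1

/-- A branch: a nontrivial path whose end vertices have degree different from 2 and whose
internal vertices have degree 2. -/
def IsBranch {V : Type*} (G : SimpleGraph V) (b : PathData G) : Prop :=
  b.walk.IsPath ∧ 0 < b.walk.length ∧ gdeg G b.fst ≠ 2 ∧ gdeg G b.snd ≠ 2 ∧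
    ∀ w ∈ b.walk.support, w ≠ b.fst → w ≠ b.snd → gdeg G w = 2

/-- An endpath: a path between two leaves. -/
def IsEndpath {V : Type*} (G : SimpleGraph V) (P : PathData G) : Prop :=
  P.walk.IsPath ∧ gdeg G P.fst = 1 ∧ gdeg G P.snd = 1

/-- `b` is contained in `P` if every edge of `b` is an edge of `P`. -/
def ContainedIn {V : Type*} {G : SimpleGraph V} (b P : PathData G) : Prop :=
  b.edgeSet ⊆ P.edgeSet

/-- The endpath `P` contains two distinct branches `b₁, b₂` whose value `k b₁ + k b₂` is
maximal among all pairs of distinct branches. -/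
def HasMaxPair {V : Type*} (G : SimpleGraph V) (P : PathData G) : Prop :=
  ∃ b₁ b₂ : PathData G, IsBranch G b₁ ∧ IsBranch G b₂ ∧ b₁.edgeSet ≠ b₂.edgeSet ∧
    ContainedIn b₁ P ∧ ContainedIn b₂ P ∧
    ∀ c₁ c₂ : PathData G, IsBranch G c₁ → IsBranch G c₂ → c₁.edgeSet ≠ c₂.edgeSet →
      c₁.k + c₂.k ≤ b₁.k + b₂.k

/-- `m(T)`: the minimum, over all endpaths `P` containing a pair of distinct branches of
maximal total `k`-value, of the maximum of `k(b)` over branches `b` not contained in `P`. -/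
noncomputable def mVal {V : Type*} (G : SimpleGraph V) : ℕ :=
  sInf {m | ∃ P : PathData G, IsEndpath G P ∧ HasMaxPair G P ∧
    m = sSup {k | ∃ b : PathData G, IsBranch G b ∧ ¬ ContainedIn b P ∧ k = b.k}}

/-- A graph is a path (graph) if it has a hamiltonian path containing all of its edges. -/
def IsPathGraph {V : Type*} (G : SimpleGraph V) : Prop :=
  ∃ (u v : V) (p : G.Walk u v), p.IsPath ∧ (∀ w, w ∈ p.support) ∧
    ∀ e ∈ G.edgeSet, e ∈ p.edges

/-- A central path of a caterpillar: a path such that every vertex of the graph is at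
distance at most 1 from it. -/
def IsCentralPath {V : Type*} (G : SimpleGraph V) (P : PathData G) : Prop :=
  P.walk.IsPath ∧ ∀ w : V, w ∈ P.walk.support ∨ ∃ x ∈ P.walk.support, G.Adj x w

/-- A caterpillar is a tree in which every vertex is at distance at most one from a
central path. -/
def IsCaterpillar {V : Type*} (G : SimpleGraph V) : Prop :=
  G.IsTree ∧ ∃ P : PathData G, IsCentralPath G P

/-- A cutvertex: a vertex whose deletion disconnects the graph. -/
def IsCutvertex {V : Type*} (G : SimpleGraph V) (v : V) : Prop :=
  ¬ (G.induce {w | w ≠ v}).Connected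

/-- A graph with no cutvertex. -/
def NoCutvertex {V : Type*} (G : SimpleGraph V) : Prop :=
  ∀ v, ¬ IsCutvertex G v

/-- A block of `G`: a maximal connected subgraph of `G` having no cutvertex. -/
def IsBlock {V : Type*} {G : SimpleGraph V} (B : G.Subgraph) : Prop :=
  Maximal (fun H : G.Subgraph => H.Connected ∧ NoCutvertex H.coe) B

/-- The block-cutvertex graph of `G`: vertices are the blocks and cutvertices of `G`,
a block `B` being adjacent to a cutvertex `c` iff `c` lies in `B`. -/
def blockCutGraph {V : Type*} (G : SimpleGraph V) :
    SimpleGraph ({B : G.Subgraph // IsBlock B} ⊕ {v : V // IsCutvertex G v}) where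
  Adj x y :=
    match x, y with
    | Sum.inl B, Sum.inr c => c.1 ∈ B.1.verts
    | Sum.inr c, Sum.inl B => c.1 ∈ B.1.verts
    | _, _ => False
  symm := ⟨by rintro (B | c) (B' | c') h <;> simp_all⟩
  loopless := ⟨by rintro (B | c) h <;> simp_all⟩

namespace List

variable {α : Type*}

theorem isChain_ne_cons_append_singleton {a : α} {l : List α} (hnd : (a :: l).Nodup)
    (hl : l ≠ []) : (a :: l ++ [a]).IsChain (· ≠ ·) := by
  refine isChain_append.mpr ⟨Pairwise.isChain hnd, .singleton a, fun x hx y hy => ?_⟩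
  obtain rfl : a = y := by simpa using hy
  rw [getLast?_cons, Option.mem_some_iff, getLast?_eq_some_getLast hl, Option.getD_some] at hx
  rintro rfl
  exact (nodup_cons.mp hnd).1 (hx ▸ getLast_mem hl)

theorem IsChain.and {R S : α → α → Prop} {l : List α} (hR : l.IsChain R) (hS : l.IsChain S) :
    l.IsChain fun a b => R a b ∧ S a b :=
  isChain_iff_getElem.mpr fun i hi =>
    ⟨isChain_iff_getElem.mp hR i hi, isChain_iff_getElem.mp hS i hi⟩

end List

namespace Sym2

variable {α : Type*}

def Meets (e f : Sym2 α) : Prop := ∃ x, x ∈ e ∧ x ∈ f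

theorem meets_diag_left {v : α} {e : Sym2 α} : Meets s(v, v) e ↔ v ∈ e := by
  simp [Meets]

theorem isChain_meets_of_forall_mem {v : α} {l : List (Sym2 α)} (h : ∀ e ∈ l, v ∈ e) :
    l.IsChain Sym2.Meets :=
  List.Pairwise.isChain <| List.pairwise_of_forall_mem_list fun e he f hf => ⟨v, h e he, h f hf⟩

end Sym2

open scoped List

theorem hamiltonianGraph_of_isChain {W : Type*} {H : SimpleGraph W} {a : W} {l : List W}
    (hchain : (a :: l ++ [a]).IsChain H.Adj) (hnd : (a :: l).Nodup) (hlen : 2 ≤ l.length)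
    (hall : ∀ w, w ∈ a :: l) : HamiltonianGraph H := by
  obtain ⟨p, hsupp⟩ : ∃ p : H.Walk a a, p.support = a :: (l ++ [a]) :=
    ⟨(Walk.ofSupport _ (by simp) hchain).copy rfl (by simp),
      (Walk.support_copy _ _ _).trans (Walk.support_ofSupport _ _)⟩
  have hplen : p.length = l.length + 1 := by
    simpa [hsupp] using p.length_support.symm
  have hp : ¬ p.Nil := by simp [← Walk.length_eq_zero_iff, hplen]
  refine ⟨a, p, ?_, fun w => ?_⟩
  · rw [Walk.isCycle_iff_isPath_tail_and_le_length, Walk.isPath_def,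
      Walk.support_tail_of_not_nil _ hp, hsupp, List.tail_cons, List.nodup_append_comm]
    exact ⟨hnd, by omega⟩
  · rw [hsupp]; simpa [or_comm] using hall w

namespace SimpleGraph

variable {V : Type*} {G : SimpleGraph V}

theorem exists_walk_edges_sublist_of_mem {e : Sym2 V} (he : e ∈ G.edgeSet) {a b : V}
    (ha : a ∈ e) (hb : b ∈ e) : ∃ q : G.Walk a b, q.edges <+ [e] := by
  by_cases hab : a = b
  · subst hab
    exact ⟨.nil, by simp⟩
  · obtain rfl := (Sym2.mem_and_mem_iff hab).mp ⟨ha, hb⟩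
    exact ⟨Adj.toWalk he, .refl _⟩

theorem exists_walk_of_lineGraph_walk {e f : G.edgeSet} (p : G.lineGraph.Walk e f) {a b : V}
    (ha : a ∈ (e : Sym2 V)) (hb : b ∈ (f : Sym2 V)) :
    ∃ q : G.Walk a b, q.edges <+ p.support.map Subtype.val ∧
      ∀ g ∈ p.support, ∃ x ∈ q.support, x ∈ (g : Sym2 V) := by
  induction p generalizing a with
  | @nil e =>
    obtain ⟨q, hq⟩ := exists_walk_edges_sublist_of_mem e.2 ha hb
    refine ⟨q, by simpa using hq, fun g hg => ?_⟩
    obtain rfl : g = _ := by simpa using hg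
    exact ⟨a, q.start_mem_support, ha⟩
  | @cons e e' f hadj p ih =>
    obtain ⟨-, w, hwe, hwe'⟩ := lineGraph_adj_iff_exists.mp hadj
    obtain ⟨q₀, hq₀⟩ := exists_walk_edges_sublist_of_mem e.2 ha hwe
    obtain ⟨q, hq, hdom⟩ := ih hwe' hb
    refine ⟨q₀.append q, ?_, fun g hg => ?_⟩
    · rw [Walk.edges_append, Walk.support_cons, List.map_cons, ← List.singleton_append]
      exact hq₀.append hq
    · rcases List.mem_cons.mp hg with rfl | hg
      · exact ⟨a, Walk.start_mem_support _, ha⟩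
      · obtain ⟨x, hx, hxg⟩ := hdom g hg
        exact ⟨x, Walk.mem_support_append_iff _ _ |>.mpr (Or.inr hx), hxg⟩

theorem exists_dominating_closed_trail_of_hamiltonianGraph_lineGraph
    (h : HamiltonianGraph G.lineGraph) :
    ∃ (v : V) (t : G.Walk v v), t.IsTrail ∧ ∀ e ∈ G.edgeSet, ∃ x ∈ t.support, x ∈ e := by
  obtain ⟨e₀, _ | ⟨hadj, p⟩, hcycle, hall⟩ := h
  · exact absurd hcycle Walk.not_isCycle_nil
  obtain ⟨hpath, -⟩ := (Walk.cons_isCycle_iff p hadj).mp hcycle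
  obtain ⟨-, v, hv₀, hv₁⟩ := lineGraph_adj_iff_exists.mp hadj
  obtain ⟨t, ht, hdom⟩ := exists_walk_of_lineGraph_walk p hv₁ hv₀
  refine ⟨v, t, ⟨(hpath.support_nodup.map Subtype.val_injective).sublist ht⟩, fun e he => ?_⟩
  have hmem : ⟨e, he⟩ ∈ p.support := by
    rcases List.mem_cons.mp (hall ⟨e, he⟩) with heq | hmem
    · exact heq ▸ p.end_mem_support
    · exact hmem
  exact hdom _ hmem

variable [DecidableEq V]

def Walk.edgeTour : {x y : V} → G.Walk x y → List G.edgeSet → List G.edgeSet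
  | x, _, .nil, F => F.filter (x ∈ ·.1)
  | x, _, .cons (v := z) h w, F =>
      F.filter (x ∈ ·.1) ++ ⟨s(x, z), h⟩ :: w.edgeTour (F.filter (x ∉ ·.1))

namespace Walk

theorem mem_edgeTour {x y : V} (w : G.Walk x y) (F : List G.edgeSet) (g : G.edgeSet) :
    g ∈ w.edgeTour F ↔ (g ∈ F ∧ ∃ v ∈ w.support, v ∈ (g : Sym2 V)) ∨ (g : Sym2 V) ∈ w.edges := by
  induction w generalizing F with
  | nil => simp [edgeTour]
  | @cons x z y h w ih =>
    simp only [edgeTour, List.mem_append, List.mem_cons, List.mem_filter, ih, support_cons,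
      edges_cons, decide_eq_true_eq, Subtype.ext_iff]
    by_cases hxg : x ∈ (g : Sym2 V) <;> simp [hxg, or_left_comm]

theorem nodup_edgeTour {x y : V} {w : G.Walk x y} (hw : w.IsTrail) {F : List G.edgeSet}
    (hF : F.Nodup) (hdisj : ∀ f ∈ F, (f : Sym2 V) ∉ w.edges) : (w.edgeTour F).Nodup := by
  induction w generalizing F with
  | nil => exact hF.filter _
  | @cons x z y h w ih =>
    rw [isTrail_cons] at hw
    have hdisj' : ∀ f ∈ F.filter (x ∉ ·.1), (f : Sym2 V) ∉ w.edges := fun f hf hfw =>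
      hdisj f (List.mem_of_mem_filter hf) (List.mem_cons_of_mem _ hfw)
    refine List.nodup_append.mpr
      ⟨hF.filter _, List.nodup_cons.mpr ⟨?_, ih hw.1 (hF.filter _) hdisj'⟩, ?_⟩
    · rw [mem_edgeTour]
      rintro (⟨hF', -⟩ | hw')
      · exact hdisj _ (List.mem_of_mem_filter hF') (by simp)
      · exact hw.2 hw'
    · rintro g hgA g' hg' rfl
      have hgF := List.mem_of_mem_filter hgA
      have hxg : x ∈ (g : Sym2 V) := by simpa using (List.mem_filter.mp hgA).2
      rcases List.mem_cons.mp hg' with rfl | hg'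
      · exact hdisj _ hgF (by simp)
      · rcases (mem_edgeTour _ _ _).mp hg' with ⟨hF', -⟩ | hw'
        · simp [hxg] at hF'
        · exact hdisj _ hgF (List.mem_cons_of_mem _ hw')

theorem isChain_edgeTour {x y : V} (w : G.Walk x y) (F : List G.edgeSet) {a b : Sym2 V}
    (ha : x ∈ a) (hb : y ∈ b) :
    (a :: (w.edgeTour F).map Subtype.val ++ [b]).IsChain Sym2.Meets := by
  induction w generalizing F a with
  | @nil x =>
    refine Sym2.isChain_meets_of_forall_mem (v := x) fun e he => ?_
    simp only [edgeTour, List.cons_append, List.mem_cons, List.mem_append, List.mem_map,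
      List.mem_filter, decide_eq_true_eq, List.not_mem_nil, or_false] at he
    rcases he with rfl | ⟨_, ⟨-, hx⟩, rfl⟩ | rfl
    exacts [ha, hx, hb]
  | @cons x z y h w ih =>
    have hsplit : a :: (edgeTour (cons h w) F).map Subtype.val ++ [b] =
        (a :: (F.filter (x ∈ ·.1)).map Subtype.val) ++ [s(x, z)] ++
          ((w.edgeTour (F.filter (x ∉ ·.1))).map Subtype.val ++ [b]) := by
      simp [edgeTour]
    rw [hsplit]
    refine List.IsChain.append_overlap (Sym2.isChain_meets_of_forall_mem (v := x) fun e he => ?_)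
      (ih _ (Sym2.mem_mk_right x z) hb) (List.cons_ne_nil _ _)
    simp only [List.cons_append, List.mem_cons, List.mem_append, List.mem_map, List.mem_filter,
      decide_eq_true_eq, List.not_mem_nil, or_false] at he
    rcases he with rfl | ⟨_, ⟨-, hx⟩, rfl⟩ | rfl
    exacts [ha, hx, Sym2.mem_mk_left x z]

end Walk

theorem hamiltonianGraph_lineGraph_of_dominating_closed_trail (hE : 3 ≤ G.edgeSet.ncard) {v : V}
    {t : G.Walk v v} (ht : t.IsTrail) (hdom : ∀ e ∈ G.edgeSet, ∃ x ∈ t.support, x ∈ e) :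
    HamiltonianGraph G.lineGraph := by
  have : Finite G.edgeSet := (Set.finite_of_ncard_pos (by omega)).to_subtype
  obtain ⟨F, hFnd, hF⟩ : ∃ F : List G.edgeSet, F.Nodup ∧ ∀ e, e ∈ F ↔ (e : Sym2 V) ∉ t.edges :=
    ⟨(Set.toFinite {e : G.edgeSet | (e : Sym2 V) ∉ t.edges}).toFinset.toList,
      Finset.nodup_toList _, by simp⟩
  have hall : ∀ e, e ∈ t.edgeTour F := fun e => by
    rw [Walk.mem_edgeTour]
    by_cases he : (e : Sym2 V) ∈ t.edges
    · exact .inr he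
    · exact .inl ⟨(hF e).mpr he, hdom e e.2⟩
  have hnd : (t.edgeTour F).Nodup := Walk.nodup_edgeTour ht hFnd fun f hf => (hF f).mp hf
  have hlen : 3 ≤ (t.edgeTour F).length := hE.trans <|
    (Nat.card_le_card_of_surjective _ fun e => List.mem_iff_get.mp (hall e)).trans_eq
      (Nat.card_fin _)
  obtain ⟨a, l, hl⟩ :=
    List.exists_cons_of_ne_nil (List.ne_nil_of_length_pos (l := t.edgeTour F) (by omega))
  -- `s(v, v)` meets exactly the edges at `v`: it stands in for the vertex `v` at both ends.
  have hchain := t.isChain_edgeTour F (a := s(v, v)) (b := s(v, v)) (by simp) (by simp)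
  rw [hl] at hall hnd hlen hchain
  have hva : v ∈ (a : Sym2 V) := Sym2.meets_diag_left.mp hchain.rel
  have hmeets : ((a :: l ++ [a]).map Subtype.val).IsChain Sym2.Meets := by
    have := t.isChain_edgeTour F (a := s(v, v)) (by simp) hva
    rw [hl] at this
    simpa using this.tail
  refine hamiltonianGraph_of_isChain ?_ hnd (by simpa using hlen) hall
  exact ((List.isChain_ne_cons_append_singleton hnd (by rintro rfl; simp at hlen)).and
    (List.isChain_map _ |>.mp hmeets)).imp fun e f h => lineGraph_adj_iff_exists.mpr h

end SimpleGraph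

theorem lineGraph_hamiltonian_iff_dominating_closed_trail_general {V : Type*}
    (G : SimpleGraph V) (hE : 3 ≤ G.edgeSet.ncard) :
    HamiltonianGraph G.lineGraph ↔
      ∃ (v : V) (t : G.Walk v v), t.IsTrail ∧
        ∀ e ∈ G.edgeSet, ∃ x ∈ t.support, x ∈ e := by
  classical
  exact ⟨exists_dominating_closed_trail_of_hamiltonianGraph_lineGraph,
    fun ⟨_, _, ht, hdom⟩ => hamiltonianGraph_lineGraph_of_dominating_closed_trail hE ht hdom⟩

/-- Harary–Nash-Williams: for a finite connected simple graph `G` with at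
least three edges, `L(G)` is hamiltonian iff `G` has a dominating closed trail. -/
theorem lineGraph_hamiltonian_iff_dominating_closed_trail {V : Type*} [Fintype V]
    (G : SimpleGraph V) (hG : G.Connected) (hE : 3 ≤ G.edgeSet.ncard) :
    HamiltonianGraph G.lineGraph ↔
      ∃ (v : V) (t : G.Walk v v), t.IsTrail ∧
        ∀ e ∈ G.edgeSet, ∃ x ∈ t.support, x ∈ e :=
  lineGraph_hamiltonian_iff_dominating_closed_trail_general G hE
end

section
/- Let G be a finite connected simple graph with at least one edge. Then the line graph L(G) is traceable (contains a Hamiltonian path) if and only if G has a dominating trail. -/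
open SimpleGraph

/- A hamiltonian path of `L(G)` is a sequence listing every edge once, consecutive edges meeting.
Walking through the common vertices of consecutive edges gives a trail, which meets every edge.
Conversely, along a dominating trail visit each vertex in turn and, before leaving it by the next
trail edge, list the edges at it that are off the trail and were not listed before. -/

theorem List.Nodup.isChain_ne_and {α : Type*} {R : α → α → Prop} {l : List α} (hnd : l.Nodup)
    (h : l.IsChain R) : l.IsChain (fun a b => a ≠ b ∧ R a b) := by
  induction l using List.twoStepInduction <;> grind

theorem traceableGraph_iff_exists_list {W : Type*} (H : SimpleGraph W) :
    TraceableGraph H ↔ ∃ l : List W, l ≠ [] ∧ l.Nodup ∧ (∀ w, w ∈ l) ∧ l.IsChain H.Adj := by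
  constructor
  · rintro ⟨u, v, p, hp, hall⟩
    exact ⟨p.support, p.support_ne_nil, hp.support_nodup, hall, p.isChain_adj_support⟩
  · rintro ⟨l, hne, hnd, hall, hchain⟩
    exact ⟨_, _, Walk.ofSupport l hne hchain, by simpa [Walk.isPath_def], by simpa⟩

section

variable {V : Type*}

theorem traceableGraph_lineGraph_iff (G : SimpleGraph V) :
    TraceableGraph G.lineGraph ↔ ∃ l : List (Sym2 V), l ≠ [] ∧ l.Nodup ∧
      (∀ e, e ∈ l ↔ e ∈ G.edgeSet) ∧ l.IsChain (fun e f => ∃ x, x ∈ e ∧ x ∈ f) := by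
  rw [traceableGraph_iff_exists_list]
  constructor
  · rintro ⟨l, hne, hnd, hall, hchain⟩
    refine ⟨l.map Subtype.val, mt List.map_eq_nil_iff.mp hne, hnd.map Subtype.val_injective,
      fun e => ⟨fun he => ?_, fun he => List.mem_map_of_mem (hall ⟨e, he⟩)⟩,
      List.isChain_map_of_isChain _ (fun e f hef => (lineGraph_adj_iff_exists.mp hef).2) hchain⟩
    obtain ⟨f, -, rfl⟩ := List.mem_map.mp he
    exact f.2
  · rintro ⟨l, hne, hnd, hall, hchain⟩
    refine ⟨l.attachWith _ fun e => (hall e).mp, by simpa using hne, ?_, ?_, ?_⟩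
    · exact List.Nodup.of_map Subtype.val (by rwa [List.attachWith_map_subtype_val])
    · exact fun e => (List.mem_attachWith _ _).mpr ((hall e).mpr e.2)
    · refine (List.isChain_attachWith _).mpr ((hnd.isChain_ne_and hchain).imp_of_mem_imp ?_)
      rintro e f he hf ⟨hne, hef⟩
      exact ⟨(hall e).mp he, (hall f).mp hf,
        lineGraph_adj_iff_exists.mpr ⟨fun h => hne (congrArg Subtype.val h), hef⟩⟩

theorem exists_dominating_trail_of_isChain (G : SimpleGraph V) (e : Sym2 V) (r : List (Sym2 V))
    (hG : ∀ f ∈ e :: r, f ∈ G.edgeSet) (hnd : (e :: r).Nodup)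
    (hchain : (e :: r).IsChain (fun e f => ∃ x, x ∈ e ∧ x ∈ f)) :
    ∃ (a b : V) (t : G.Walk a b), t.IsTrail ∧ a ∈ e ∧ t.edges ⊆ r ∧
      ∀ f ∈ e :: r, ∃ x ∈ t.support, x ∈ f := by
  induction r generalizing e with
  | nil => exact ⟨e.out.1, _, .nil, .nil, e.out_fst_mem, by simp, by simpa using e.out_fst_mem⟩
  | cons e' r ih =>
    obtain ⟨⟨w, hwe, hwe'⟩, hchain'⟩ := List.isChain_cons_cons.mp hchain
    obtain ⟨a, b, t, ht, hae', hedges, hdom⟩ :=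
      ih e' (fun f hf => hG f (.tail _ hf)) hnd.of_cons hchain'
    by_cases hwa : w = a
    · subst hwa
      refine ⟨w, b, t, ht, hwe, List.subset_cons_of_subset _ hedges, ?_⟩
      rintro f (_ | ⟨_, hf⟩)
      exacts [⟨w, t.start_mem_support, hwe⟩, hdom f hf]
    · have he' : e' = s(w, a) := (Sym2.mem_and_mem_iff hwa).mp ⟨hwe', hae'⟩
      have hadj : G.Adj w a := by simpa [he'] using hG e' (by simp)
      have hnew : s(w, a) ∉ t.edges := fun h =>
        (List.nodup_cons.mp hnd.of_cons).1 (he' ▸ hedges h)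
      refine ⟨w, b, .cons hadj t, (Walk.isTrail_cons _ _).mpr ⟨ht, hnew⟩, hwe, ?_, ?_⟩
      · simpa [he'] using List.cons_subset_cons _ hedges
      · rintro f (_ | ⟨_, hf⟩)
        · exact ⟨w, by simp, hwe⟩
        · obtain ⟨x, hx, hxf⟩ := hdom f hf
          exact ⟨x, by simp [hx], hxf⟩

theorem isChain_of_common_mem {l : List (Sym2 V)} {u : V} (h : ∀ e ∈ l, u ∈ e) :
    l.IsChain (fun e f => ∃ x, x ∈ e ∧ x ∈ f) :=
  (List.pairwise_of_forall_mem_list fun e he f hf => ⟨u, h e he, h f hf⟩).isChain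

theorem exists_edge_list_of_trail (G : SimpleGraph V) {u v : V} (t : G.Walk u v) (ht : t.IsTrail)
    (S : Finset (Sym2 V)) (hSt : ∀ e ∈ S, e ∉ t.edges)
    (hSdom : ∀ e ∈ S, ∃ x ∈ t.support, x ∈ e) :
    ∃ l : List (Sym2 V), l.Nodup ∧ (∀ e, e ∈ l ↔ e ∈ t.edges ∨ e ∈ S) ∧
      l.IsChain (fun e f => ∃ x, x ∈ e ∧ x ∈ f) ∧ ∀ e ∈ l.head?, u ∈ e := by
  classical
  induction t generalizing S with
  | @nil u =>
    have hu : ∀ e ∈ S.toList, u ∈ e := by simpa using hSdom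
    exact ⟨S.toList, S.nodup_toList, by simp, isChain_of_common_mem hu,
      fun e he => hu e (List.mem_of_mem_head? he)⟩
  | @cons u w v hadj t ih =>
    obtain ⟨ht, huw⟩ := (Walk.isTrail_cons _ _).mp ht
    -- the edges of `S` at `u` are listed before `s(u, w)`, the others along `t`
    have hSt' : ∀ e ∈ S.filter (u ∉ ·), e ∉ t.edges := fun e he het =>
      hSt e (Finset.mem_filter.mp he).1 (by simp [het])
    have hSdom' : ∀ e ∈ S.filter (u ∉ ·), ∃ x ∈ t.support, x ∈ e := by
      intro e he
      obtain ⟨heS, hue⟩ := Finset.mem_filter.mp he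
      obtain ⟨x, hx, hxe⟩ := hSdom e heS
      rcases List.mem_cons.mp (Walk.support_cons _ _ ▸ hx) with rfl | hx
      exacts [absurd hxe hue, ⟨x, hx, hxe⟩]
    obtain ⟨l, hnd, hmem, hchain, hhead⟩ := ih ht _ hSt' hSdom'
    have hSu : ∀ e ∈ (S.filter (u ∈ ·)).toList, u ∈ e := by simp
    refine ⟨(S.filter (u ∈ ·)).toList ++ s(u, w) :: l, ?_, ?_, ?_, ?_⟩
    · rw [List.nodup_append, List.nodup_cons, hmem]
      refine ⟨Finset.nodup_toList _, ⟨?_, hnd⟩, ?_⟩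
      · rintro (h | h)
        exacts [huw h, hSt _ (Finset.mem_filter.mp h).1 (by simp)]
      · rintro e he _ hl rfl
        obtain ⟨heS, hue⟩ := Finset.mem_filter.mp (Finset.mem_toList.mp he)
        rcases List.mem_cons.mp hl with rfl | hl
        · exact hSt _ heS (by simp)
        · rcases (hmem e).mp hl with h | h
          exacts [hSt _ heS (by simp [h]), (Finset.mem_filter.mp h).2 hue]
    · intro e
      simp only [List.mem_append, List.mem_cons, hmem, Finset.mem_toList, Finset.mem_filter,
        Walk.edges_cons]
      tauto
    · rw [List.isChain_append, List.isChain_cons]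
      refine ⟨isChain_of_common_mem hSu, ⟨fun f hf => ⟨w, by simp, hhead f hf⟩, hchain⟩, ?_⟩
      intro e he f hf
      obtain rfl : f = s(u, w) := by simpa using hf.symm
      exact ⟨u, hSu e (List.mem_of_mem_getLast? he), by simp⟩
    · generalize (S.filter (u ∈ ·)).toList = A at hSu ⊢
      cases A <;> simp_all

end

theorem lineGraph_traceable_iff_dominating_trail_general {V : Type*} [Fintype V]
    (G : SimpleGraph V) (hE : G.edgeSet.Nonempty) :
    TraceableGraph G.lineGraph ↔
      ∃ (u v : V) (t : G.Walk u v), t.IsTrail ∧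
        ∀ e ∈ G.edgeSet, ∃ x ∈ t.support, x ∈ e := by
  classical
  rw [traceableGraph_lineGraph_iff]
  constructor
  · rintro ⟨_ | ⟨e, r⟩, hne, hnd, hall, hchain⟩
    · exact absurd rfl hne
    obtain ⟨a, b, t, ht, -, -, hdom⟩ :=
      exists_dominating_trail_of_isChain G e r (fun f => (hall f).mp) hnd hchain
    exact ⟨a, b, t, ht, fun f hf => hdom f ((hall f).mpr hf)⟩
  · rintro ⟨u, v, t, ht, hdom⟩
    obtain ⟨l, hnd, hmem, hchain, -⟩ := exists_edge_list_of_trail G t ht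
      (G.edgeFinset \ t.edges.toFinset) (by simp) (fun e he => hdom e (by simp_all))
    have hl : ∀ e, e ∈ l ↔ e ∈ G.edgeSet := fun e => by
      rw [hmem, Finset.mem_sdiff, List.mem_toFinset, mem_edgeFinset]
      have := t.edges_subset_edgeSet (e := e)
      tauto
    obtain ⟨e, he⟩ := hE
    exact ⟨l, List.ne_nil_of_mem ((hl e).mpr he), hnd, hl, hchain⟩

/-- Xiong–Zong: for a finite connected simple graph `G` with at least one
edge, `L(G)` is traceable iff `G` has a dominating trail. -/
theorem lineGraph_traceable_iff_dominating_trail {V : Type*} [Fintype V]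
    (G : SimpleGraph V) (hG : G.Connected) (hE : G.edgeSet.Nonempty) :
    TraceableGraph G.lineGraph ↔
      ∃ (u v : V) (t : G.Walk u v), t.IsTrail ∧
        ∀ e ∈ G.edgeSet, ∃ x ∈ t.support, x ∈ e :=
  lineGraph_traceable_iff_dominating_trail_general G hE
end

section
/- Let T be a finite caterpillar that is not a path. Then T itself contains no Hamiltonian path, but its line graph L(T) contains a Hamiltonian path; consequently h_p(T) = 1. -/
open SimpleGraph

/-!
A hamiltonian path in a tree contains every edge, since in an acyclic graph an edge joining two
vertices of a walk is an edge of that walk; so a traceable tree is a path.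

For the line graph, run along the central path `v₀ v₁ … v_k` and list, at each `v_i`, first the
edges at `v_i` off the path and then the path edge `v_i v_{i+1}`. Consecutive edges of this list
share a vertex, no edge is listed twice because an edge joining two path vertices is a path edge,
and every edge is listed because each edge of a caterpillar has an end on the central path (the
bridge `xy` would otherwise be avoided by the detour `x a ⋯ b y` through the path).
-/

namespace SimpleGraph

variable {V : Type*} {G : SimpleGraph V}

lemma Walk.exists_walk_edges_subset {u v x y : V} (p : G.Walk u v) (hx : x ∈ p.support)
    (hy : y ∈ p.support) : ∃ q : G.Walk x y, q.edges ⊆ p.edges := by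
  classical
  refine ⟨(p.takeUntil x hx).reverse.append (p.takeUntil y hy), fun e he => ?_⟩
  rw [Walk.edges_append, Walk.edges_reverse, List.mem_append, List.mem_reverse] at he
  exact he.elim (fun h => p.edges_takeUntil_subset_edges hx h)
    (fun h => p.edges_takeUntil_subset_edges hy h)

lemma IsAcyclic.mem_edges_of_adj (hG : G.IsAcyclic) {u v x y : V} (p : G.Walk u v)
    (hx : x ∈ p.support) (hy : y ∈ p.support) (hxy : G.Adj x y) : s(x, y) ∈ p.edges := by
  obtain ⟨q, hq⟩ := p.exists_walk_edges_subset hx hy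
  exact hq (isBridge_iff_forall_walk_mem_edges.mp (isAcyclic_iff_forall_adj_isBridge.mp hG hxy) q)

lemma IsAcyclic.isPathGraph_of_traceable (hG : G.IsAcyclic) (h : TraceableGraph G) :
    IsPathGraph G := by
  obtain ⟨u, v, p, hp, hall⟩ := h
  refine ⟨u, v, p, hp, hall, fun e he => ?_⟩
  induction e using Sym2.ind with
  | _ x y => exact hG.mem_edges_of_adj p (hall x) (hall y) he

lemma Connected.isPathGraph_of_edgeSet_eq_empty (hG : G.Connected) (h : G.edgeSet = ∅) :
    IsPathGraph G := by
  rw [edgeSet_eq_empty] at h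
  subst h
  obtain ⟨_, ⟨v⟩⟩ := connected_bot_iff.mp hG
  exact ⟨v, v, .nil, .nil, fun w => by simp [Subsingleton.elim w v], by simp⟩

lemma IsAcyclic.exists_mem_support_of_mem_edgeSet (hG : G.IsAcyclic) {u v : V} {p : G.Walk u v}
    (hcentral : ∀ w, w ∈ p.support ∨ ∃ x ∈ p.support, G.Adj x w) {e : Sym2 V}
    (he : e ∈ G.edgeSet) : ∃ z ∈ p.support, z ∈ e := by
  induction e using Sym2.ind with | _ x y => ?_
  by_contra! h
  have hx : x ∉ p.support := fun hx => h x hx (Sym2.mem_mk_left x y)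
  have hy : y ∉ p.support := fun hy => h y hy (Sym2.mem_mk_right x y)
  obtain ⟨a, ha, hax⟩ := (hcentral x).resolve_left hx
  obtain ⟨b, hb, hby⟩ := (hcentral y).resolve_left hy
  obtain ⟨q, hq⟩ := p.exists_walk_edges_subset ha hb
  have hmem := isBridge_iff_forall_walk_mem_edges.mp (isAcyclic_iff_forall_adj_isBridge.mp hG he)
    (.cons hax.symm (q.concat hby))
  simp only [Walk.edges_cons, Walk.edges_concat, List.concat_eq_append, List.mem_cons,
    List.mem_append, List.not_mem_nil, or_false] at hmem
  rcases hmem with hxa | hxy | hxb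
  · exact hy (Sym2.congr_right.mp hxa ▸ ha)
  · exact hx (p.fst_mem_support_of_mem_edges (hq hxy))
  · exact hx (Sym2.congr_left.mp hxb ▸ hb)

lemma isChain_of_common_mem {u : V} {l : List (Sym2 V)} (h : ∀ e ∈ l, u ∈ e) :
    l.IsChain fun e f => ∃ x, x ∈ e ∧ x ∈ f :=
  (List.pairwise_of_forall_mem_list fun e he f hf => ⟨u, h e he, h f hf⟩).isChain

section Legs

variable [DecidableEq V] [G.LocallyFinite]

noncomputable def legs (G : SimpleGraph V) [G.LocallyFinite] (S : List (Sym2 V)) (u : V) :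
    List (Sym2 V) :=
  ((G.incidenceFinset u).filter (· ∉ S)).toList

lemma mem_legs {S : List (Sym2 V)} {u : V} {e : Sym2 V} :
    e ∈ G.legs S u ↔ e ∈ G.incidenceSet u ∧ e ∉ S := by
  simp [legs]

lemma nodup_legs {S : List (Sym2 V)} {u : V} : (G.legs S u).Nodup :=
  Finset.nodup_toList _

noncomputable def Walk.edgesWithLegs (S : List (Sym2 V)) :
    ∀ {u v : V}, G.Walk u v → List (Sym2 V)
  | u, _, .nil => G.legs S u
  | u, _, .cons (v := w) _ p => G.legs S u ++ s(u, w) :: p.edgesWithLegs S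

lemma Walk.mem_edgesWithLegs {S : List (Sym2 V)} {e : Sym2 V} :
    ∀ {u v : V} (p : G.Walk u v),
      e ∈ p.edgesWithLegs S ↔ e ∈ p.edges ∨ ∃ z ∈ p.support, e ∈ G.incidenceSet z ∧ e ∉ S
  | _, _, .nil => by simp [edgesWithLegs, mem_legs]
  | _, _, .cons _ p => by
    simp only [edgesWithLegs, List.mem_append, List.mem_cons, mem_edgesWithLegs p, mem_legs,
      edges_cons, support_cons]
    aesop

lemma Walk.nodup_edgesWithLegs {S : List (Sym2 V)} : ∀ {u v : V} (p : G.Walk u v), p.IsPath →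
    p.edges ⊆ S → (∀ x ∈ p.support, ∀ y ∈ p.support, G.Adj x y → s(x, y) ∈ S) →
    (p.edgesWithLegs S).Nodup
  | _, _, .nil, _, _, _ => nodup_legs
  | u, _, .cons (v := w) _ p, hp, hpS, hS => by
    rw [cons_isPath_iff] at hp
    have hpS' : p.edges ⊆ S := fun e he => hpS (by simp [he])
    have hS' : ∀ x ∈ p.support, ∀ y ∈ p.support, G.Adj x y → s(x, y) ∈ S :=
      fun x hx y hy => hS x (by simp [hx]) y (by simp [hy])
    have huw : s(u, w) ∈ S := hpS (by simp)
    have hlegs : ∀ f ∈ G.legs S u, f ∉ p.edgesWithLegs S := by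
      intro f hf hf'
      rw [mem_legs] at hf
      rcases (mem_edgesWithLegs p).mp hf' with hfp | ⟨z, hz, hzf, -⟩
      · exact hf.2 (hpS' hfp)
      · have huz : u ≠ z := fun h => hp.2 (h ▸ hz)
        have hf_eq : f = s(u, z) := (Sym2.mem_and_mem_iff huz).mp ⟨hf.1.2, hzf.2⟩
        subst hf_eq
        exact hf.2 (hS u (by simp) z (by simp [hz]) hf.1.1)
    have huw' : s(u, w) ∉ p.edgesWithLegs S := by
      rw [mem_edgesWithLegs]
      rintro (huw_p | ⟨_, _, _, huw_S⟩)
      · exact hp.2 (p.fst_mem_support_of_mem_edges huw_p)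
      · exact huw_S huw
    rw [edgesWithLegs, List.nodup_append, List.nodup_cons]
    refine ⟨nodup_legs, ⟨huw', p.nodup_edgesWithLegs hp.1 hpS' hS'⟩, ?_⟩
    intro f hf g hg hfg
    subst hfg
    rcases List.mem_cons.mp hg with rfl | hg
    · exact (mem_legs.mp hf).2 huw
    · exact hlegs f hf hg

lemma Walk.isChain_cons_edgesWithLegs {S : List (Sym2 V)} : ∀ {u v : V} (p : G.Walk u v)
    {e : Sym2 V}, u ∈ e → (e :: p.edgesWithLegs S).IsChain fun e f => ∃ x, x ∈ e ∧ x ∈ f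
  | u, _, .nil, e, he => by
    refine isChain_of_common_mem (u := u) fun f hf => ?_
    rcases List.mem_cons.mp hf with rfl | hf
    exacts [he, (mem_legs.mp hf).1.2]
  | u, _, .cons (v := w) _ p, e, he => by
    rw [edgesWithLegs, List.isChain_cons_split]
    refine ⟨isChain_of_common_mem (u := u) fun f hf => ?_,
      p.isChain_cons_edgesWithLegs (Sym2.mem_mk_right u w)⟩
    rw [← List.cons_append, List.mem_append, List.mem_cons, List.mem_singleton] at hf
    rcases hf with (rfl | hf) | rfl
    exacts [he, (mem_legs.mp hf).1.2, Sym2.mem_mk_left u w]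

end Legs

end SimpleGraph

section Traceable

variable {V : Type*} {G : SimpleGraph V}

lemma TraceableGraph.of_isChain {l : List V} (hne : l ≠ []) (hchain : l.IsChain G.Adj)
    (hnodup : l.Nodup) (hmem : ∀ v, v ∈ l) : TraceableGraph G :=
  ⟨_, _, Walk.ofSupport l hne hchain, by rwa [Walk.isPath_def, Walk.support_ofSupport],
    by simpa using hmem⟩

lemma TraceableGraph.lineGraph_of_isChain {l : List (Sym2 V)} (hne : l ≠ [])
    (hchain : l.IsChain fun e f => ∃ x, x ∈ e ∧ x ∈ f) (hnodup : l.Nodup)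
    (hmem : ∀ e, e ∈ l ↔ e ∈ G.edgeSet) : TraceableGraph G.lineGraph := by
  have hl : ∀ e ∈ l, e ∈ G.edgeSet := fun e => (hmem e).1
  have hadj : l.IsChain fun e f => e ≠ f ∧ ∃ x, x ∈ e ∧ x ∈ f :=
    List.isChain_iff_forall_rel_of_append_cons_cons.mpr fun _ _ _ _ hsplit =>
      ⟨List.isChain_iff_forall_rel_of_append_cons_cons.mp hnodup.isChain hsplit,
        List.isChain_iff_forall_rel_of_append_cons_cons.mp hchain hsplit⟩
  refine .of_isChain (l := l.pmap Subtype.mk hl) (by simpa using hne) ?_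
    (hnodup.pmap fun _ _ _ _ => congrArg Subtype.val)
    fun e => List.mem_pmap.mpr ⟨e, (hmem e).2 e.2, rfl⟩
  exact List.isChain_pmap_of_isChain (fun _ _ _ _ h => lineGraph_adj_iff_exists.mpr
    ⟨fun he => h.1 (congrArg Subtype.val he), h.2⟩) hadj hl

end Traceable

lemma hpIndex_eq_one {G : GraphBundle} (h₀ : ¬ TraceableGraph G.2)
    (h₁ : TraceableGraph G.2.lineGraph) : hpIndex G = 1 := by
  have h₁' : 1 ∈ {n | TraceableGraph (iterLine n G).2} := h₁
  refine le_antisymm (Nat.sInf_le h₁') (Nat.one_le_iff_ne_zero.mpr fun h => ?_)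
  exact (Nat.sInf_eq_zero.mp h).elim h₀ fun hs => Set.notMem_empty 1 (hs ▸ h₁')

lemma IsCaterpillar.traceableGraph_lineGraph {V : Type*} {G : SimpleGraph V} [G.LocallyFinite]
    (hG : IsCaterpillar G) (hne : G.edgeSet.Nonempty) : TraceableGraph G.lineGraph := by
  classical
  obtain ⟨hT, P, hpath, hcentral⟩ := hG
  have hmem : ∀ e, e ∈ P.walk.edgesWithLegs P.walk.edges ↔ e ∈ G.edgeSet := by
    intro e
    rw [Walk.mem_edgesWithLegs]
    refine ⟨?_, fun he => ?_⟩
    · rintro (he | ⟨z, -, he, -⟩)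
      exacts [P.walk.edges_subset_edgeSet he, he.1]
    · by_cases heP : e ∈ P.walk.edges
      · exact .inl heP
      · obtain ⟨z, hz, hze⟩ := hT.isAcyclic.exists_mem_support_of_mem_edgeSet hcentral he
        exact .inr ⟨z, hz, ⟨he, hze⟩, heP⟩
  obtain ⟨e, he⟩ := hne
  -- the loop `s(u, u)` at the start of the central path serves as a dummy head of the chain
  refine .lineGraph_of_isChain (fun h => by simpa [h] using (hmem e).2 he)
    (P.walk.isChain_cons_edgesWithLegs (Sym2.mem_mk_left P.fst P.fst)).of_cons
    (P.walk.nodup_edgesWithLegs hpath (List.Subset.refl _) fun x hx y hy hxy =>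
      hT.isAcyclic.mem_edges_of_adj P.walk hx hy hxy) hmem

/-- a finite caterpillar that is not a path has no hamiltonian path, but its
line graph has a hamiltonian path; consequently `h_p(T) = 1`. -/
theorem caterpillar_hpIndex_eq_one {V : Type} [Fintype V] (T : SimpleGraph V)
    (hcat : IsCaterpillar T) (hP : ¬ IsPathGraph T) :
    ¬ TraceableGraph T ∧ TraceableGraph T.lineGraph ∧ hpIndex ⟨V, T⟩ = 1 := by
  classical
  have hT : ¬ TraceableGraph T := fun h => hP (hcat.1.isAcyclic.isPathGraph_of_traceable h)
  have hedges : T.edgeSet.Nonempty := Set.nonempty_iff_ne_empty.mpr fun h =>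
    hP (hcat.1.connected.isPathGraph_of_edgeSet_eq_empty h)
  have hL : TraceableGraph T.lineGraph := hcat.traceableGraph_lineGraph hedges
  exact ⟨hT, hL, hpIndex_eq_one hT hL⟩
end

section
/- Let G be a finite connected simple graph, let H be a connected subgraph of G, and let c_1, c_2, c_3 be three distinct cutvertices of G lying in H such that for each i there exists a vertex c'_i adjacent to c_i with c'_i not in H, where c'_1, c'_2, c'_3 are pairwise distinct and each c'_i lies in a component of G − c_i disjoint from H. Then no path of G contains all three vertices c'_1, c'_2, c'_3; in particular G has no Hamiltonian path. -/
open SimpleGraph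

/-!
Every walk from `cᵢ'` to `cⱼ'` (`i ≠ j`) passes through `cᵢ`: otherwise, extended by the edge
`cⱼ'cⱼ`, it would join `cᵢ'` to `cⱼ ∈ H` inside `G - cᵢ`. On a path through `c₁', c₂', c₃'` one of
them, say `cᵢ'`, lies between the other two; the two segments leaving `cᵢ'` then both contain `cᵢ`,
but they meet only in `cᵢ' ≠ cᵢ`.
-/

namespace SimpleGraph

variable {V : Type*} {G : SimpleGraph V}

variable (G) in
def Separates (s u v : V) : Prop :=
  ∀ q : G.Walk u v, s ∈ q.support

variable (G) in
def IsBetween (x y z : V) : Prop :=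
  ∃ (p : G.Walk x y) (q : G.Walk y z), (p.append q).IsPath

theorem separates_of_forall_reachable_notMem {S : Set V} {c c' d d' : V} (hc' : c' ≠ c)
    (hS : ∀ w : ({x | x ≠ c} : Set V),
      (G.induce {x | x ≠ c}).Reachable ⟨c', hc'⟩ w → (w : V) ∉ S)
    (hd : d ∈ S) (hdc : d ≠ c) (hdd' : G.Adj d d') : G.Separates c c' d' := by
  intro q
  by_contra hcq
  have hq : ∀ x ∈ (q.concat hdd'.symm).support, x ∈ {x | x ≠ c} := by
    intro x hx
    rw [Walk.support_concat, List.mem_append, List.mem_singleton] at hx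
    rcases hx with hx | rfl
    · exact fun hxc => hcq (hxc ▸ hx)
    · exact hdc
  exact hS ⟨d, hdc⟩ ((q.concat hdd'.symm).induce _ hq).reachable hd

theorem IsBetween.symm {x y z : V} (h : G.IsBetween x y z) : G.IsBetween z y x := by
  obtain ⟨p, q, hpq⟩ := h
  exact ⟨q.reverse, p.reverse, by simpa [← Walk.reverse_append] using hpq.reverse⟩

theorem IsBetween.eq_of_separates {s x y z : V} (h : G.IsBetween x y z)
    (hx : G.Separates s y x) (hz : G.Separates s y z) : s = y := by
  obtain ⟨p, q, hpq⟩ := h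
  by_contra hsy
  exact hpq.ne_of_mem_support_of_append hsy (by simpa using hx p.reverse) (hz q) rfl

namespace Walk

theorem IsPath.isBetween_of_append {a b x y z : V} {p : G.Walk a y} {q : G.Walk y b}
    (hpq : (p.append q).IsPath) (hx : x ∈ p.support) (hz : z ∈ q.support) :
    G.IsBetween x y z := by
  obtain ⟨p₁, p₂, rfl⟩ := p.mem_support_iff_exists_append.mp hx
  obtain ⟨q₁, q₂, rfl⟩ := q.mem_support_iff_exists_append.mp hz
  exact ⟨p₂, q₁, isPath_of_isSubwalk ⟨p₁, q₂, by simp only [append_assoc]⟩ hpq⟩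

theorem IsPath.isBetween_or_isBetween {b x y z : V} {p : G.Walk x b} (hp : p.IsPath)
    (hy : y ∈ p.support) (hz : z ∈ p.support) : G.IsBetween x y z ∨ G.IsBetween x z y := by
  obtain ⟨p₁, p₂, rfl⟩ := p.mem_support_iff_exists_append.mp hy
  rcases (mem_support_append_iff p₁ p₂).mp hz with hz₁ | hz₂
  · obtain ⟨q₁, q₂, rfl⟩ := p₁.mem_support_iff_exists_append.mp hz₁
    exact Or.inr (hp.of_append_left.isBetween_of_append (start_mem_support q₁) (end_mem_support q₂))
  · exact Or.inl (hp.isBetween_of_append (start_mem_support p₁) hz₂)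

theorem IsPath.isBetween_trichotomy {a b x y z : V} {p : G.Walk a b} (hp : p.IsPath)
    (hx : x ∈ p.support) (hy : y ∈ p.support) (hz : z ∈ p.support) :
    G.IsBetween y x z ∨ G.IsBetween x y z ∨ G.IsBetween x z y := by
  obtain ⟨p₁, p₂, rfl⟩ := p.mem_support_iff_exists_append.mp hx
  rcases (mem_support_append_iff p₁ p₂).mp hy with hy₁ | hy₂ <;>
    rcases (mem_support_append_iff p₁ p₂).mp hz with hz₁ | hz₂
  · exact Or.inr (hp.of_append_left.reverse.isBetween_or_isBetween
      (by simpa using hy₁) (by simpa using hz₁))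
  · exact Or.inl (hp.isBetween_of_append hy₁ hz₂)
  · exact Or.inl (hp.isBetween_of_append hz₁ hy₂).symm
  · exact Or.inr (hp.of_append_right.isBetween_or_isBetween hy₂ hz₂)

end Walk

end SimpleGraph

theorem no_path_through_three_private_neighbours_general {V : Type*} (G : SimpleGraph V)
    (H : G.Subgraph)
    (c₁ c₂ c₃ : V) (hc12 : c₁ ≠ c₂) (hc13 : c₁ ≠ c₃) (hc23 : c₂ ≠ c₃)
    (hm1 : c₁ ∈ H.verts) (hm2 : c₂ ∈ H.verts) (hm3 : c₃ ∈ H.verts)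
    (c₁' c₂' c₃' : V)
    (hadj1 : G.Adj c₁ c₁') (hadj2 : G.Adj c₂ c₂') (hadj3 : G.Adj c₃ c₃')
    (hcomp1 : ∀ w : ({x | x ≠ c₁} : Set V),
      (G.induce {x | x ≠ c₁}).Reachable ⟨c₁', hadj1.ne'⟩ w → (w : V) ∉ H.verts)
    (hcomp2 : ∀ w : ({x | x ≠ c₂} : Set V),
      (G.induce {x | x ≠ c₂}).Reachable ⟨c₂', hadj2.ne'⟩ w → (w : V) ∉ H.verts)
    (hcomp3 : ∀ w : ({x | x ≠ c₃} : Set V),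
      (G.induce {x | x ≠ c₃}).Reachable ⟨c₃', hadj3.ne'⟩ w → (w : V) ∉ H.verts) :
    (∀ (a b : V) (p : G.Walk a b), p.IsPath →
      ¬ (c₁' ∈ p.support ∧ c₂' ∈ p.support ∧ c₃' ∈ p.support)) ∧
    ¬ TraceableGraph G := by
  have h12 := separates_of_forall_reachable_notMem hadj1.ne' hcomp1 hm2 hc12.symm hadj2
  have h13 := separates_of_forall_reachable_notMem hadj1.ne' hcomp1 hm3 hc13.symm hadj3
  have h21 := separates_of_forall_reachable_notMem hadj2.ne' hcomp2 hm1 hc12 hadj1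
  have h23 := separates_of_forall_reachable_notMem hadj2.ne' hcomp2 hm3 hc23.symm hadj3
  have h31 := separates_of_forall_reachable_notMem hadj3.ne' hcomp3 hm1 hc13 hadj1
  have h32 := separates_of_forall_reachable_notMem hadj3.ne' hcomp3 hm2 hc23 hadj2
  have no_path : ∀ (a b : V) (p : G.Walk a b), p.IsPath →
      ¬ (c₁' ∈ p.support ∧ c₂' ∈ p.support ∧ c₃' ∈ p.support) := by
    rintro a b p hp ⟨h₁, h₂, h₃⟩
    rcases hp.isBetween_trichotomy h₁ h₂ h₃ with h | h | h
    · exact hadj1.ne (h.eq_of_separates h12 h13)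
    · exact hadj2.ne (h.eq_of_separates h21 h23)
    · exact hadj3.ne (h.eq_of_separates h31 h32)
  exact ⟨no_path, fun ⟨u, v, p, hp, hall⟩ => no_path u v p hp ⟨hall _, hall _, hall _⟩⟩

/-- if a connected graph `G` has a connected subgraph `H` containing three
distinct cutvertices `c₁, c₂, c₃`, each having a neighbour `cᵢ'` outside `H` lying in a
component of `G - cᵢ` disjoint from `H` (the `cᵢ'` pairwise distinct), then no path of `G`
contains all of `c₁', c₂', c₃'`; in particular `G` has no hamiltonian path. -/
theorem no_path_through_three_private_neighbours {V : Type*} (G : SimpleGraph V)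
    (hG : G.Connected) (H : G.Subgraph) (hH : H.Connected)
    (c₁ c₂ c₃ : V) (hc12 : c₁ ≠ c₂) (hc13 : c₁ ≠ c₃) (hc23 : c₂ ≠ c₃)
    (hcut1 : IsCutvertex G c₁) (hcut2 : IsCutvertex G c₂) (hcut3 : IsCutvertex G c₃)
    (hm1 : c₁ ∈ H.verts) (hm2 : c₂ ∈ H.verts) (hm3 : c₃ ∈ H.verts)
    (c₁' c₂' c₃' : V)
    (hadj1 : G.Adj c₁ c₁') (hadj2 : G.Adj c₂ c₂') (hadj3 : G.Adj c₃ c₃')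
    (hn1 : c₁' ∉ H.verts) (hn2 : c₂' ∉ H.verts) (hn3 : c₃' ∉ H.verts)
    (hd12 : c₁' ≠ c₂') (hd13 : c₁' ≠ c₃') (hd23 : c₂' ≠ c₃')
    (hcomp1 : ∀ w : ({x | x ≠ c₁} : Set V),
      (G.induce {x | x ≠ c₁}).Reachable ⟨c₁', hadj1.ne'⟩ w → (w : V) ∉ H.verts)
    (hcomp2 : ∀ w : ({x | x ≠ c₂} : Set V),
      (G.induce {x | x ≠ c₂}).Reachable ⟨c₂', hadj2.ne'⟩ w → (w : V) ∉ H.verts)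
    (hcomp3 : ∀ w : ({x | x ≠ c₃} : Set V),
      (G.induce {x | x ≠ c₃}).Reachable ⟨c₃', hadj3.ne'⟩ w → (w : V) ∉ H.verts) :
    (∀ (a b : V) (p : G.Walk a b), p.IsPath →
      ¬ (c₁' ∈ p.support ∧ c₂' ∈ p.support ∧ c₃' ∈ p.support)) ∧
    ¬ TraceableGraph G :=
  no_path_through_three_private_neighbours_general G H c₁ c₂ c₃ hc12 hc13 hc23 hm1 hm2 hm3 c₁' c₂'
    c₃' hadj1 hadj2 hadj3 hcomp1 hcomp2 hcomp3
end
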